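/- arXiv:1707.02012 — 2 statements merged into one kernel-verified Lean document; each statement's English description precedes it below -/
import Mathlib

section
/- Fix nonnegative integers a,b,c with a ≤ c ≤ 2a and nonnegative integers x,y, and suppose the solution count m(x,y) (of triples (d,e,f), 0≤d≤2a-c, 0≤e≤b, f≥0, with d-e+f=x-b, e+f=y) is nonzero and y ≥ b and -x+y ≥ -b. Then, with δ∈{0,1} matching the parity of x+y-b, m(x,y) = min(⌊(2a-c-δ)/2⌋, (x-y+b-δ)/2, (x+y-b-δ)/2) + 1, and the set of solutions is exactly {(δ, (−x+y+b+δ)/2, (x+y−b−δ)/2) + j·(2,1,−1) : 0 ≤ j ≤ m(x,y)−1}. -/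
/-- The solution set: integer triples `(d,e,f)` with `0 ≤ d ≤ 2a−c`, `0 ≤ e ≤ b`, `0 ≤ f`,
`d − e + f = x − b`, `e + f = y`. -/
def solSet (a b c x y : ℕ) : Set (ℤ × ℤ × ℤ) :=
  {t | 0 ≤ t.1 ∧ t.1 ≤ 2 * (a : ℤ) - c ∧ 0 ≤ t.2.1 ∧ t.2.1 ≤ (b : ℤ) ∧ 0 ≤ t.2.2 ∧
    t.1 - t.2.1 + t.2.2 = (x : ℤ) - b ∧ t.2.1 + t.2.2 = (y : ℤ)}

/-- `mcount a b c x y` is the number of solutions. -/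
noncomputable def mcount (a b c x y : ℕ) : ℕ := Set.ncard (solSet a b c x y)

/-!
Eliminating `f = y − e` leaves `d = x + y − b − 2(y − e)`, so `d ≡ δ (mod 2)` and every
solution is `(δ, p, q) + j·(2,1,−1)` for `p = (−x+y+b+δ)/2`, `q = (x+y−b−δ)/2` and an integer `j`.
The constraints on `d`, `e`, `f` then become `0 ≤ j` (the lower bound on `e` being implied by
`p ≥ 0`) together with the three upper bounds `j ≤ ⌊(2a−c−δ)/2⌋`, `j ≤ (x−y+b−δ)/2`, `j ≤ q`.
So the solutions are the injective image of the integer interval `[0, M]`, `M` the minimum of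
those three bounds, and there are `M + 1` of them as soon as there is one.
-/

def progression (δ p q j : ℤ) : ℤ × ℤ × ℤ := (δ + 2 * j, p + j, q - j)

theorem progression_injective (δ p q : ℤ) : Function.Injective (progression δ p q) := by
  intro i j h
  simp only [progression, Prod.mk.injEq] at h
  omega

theorem Int.image_Icc_zero_eq_setOf {α : Type*} (g : ℤ → α) (M : ℤ) :
    g '' Set.Icc 0 M = {t | ∃ j : ℕ, (j : ℤ) ≤ M ∧ t = g j} := by
  ext t
  constructor
  · rintro ⟨j, ⟨hj0, hjM⟩, rfl⟩
    exact ⟨j.toNat, by omega, by rw [Int.toNat_of_nonneg hj0]⟩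
  · rintro ⟨j, hjM, rfl⟩
    exact ⟨j, ⟨j.cast_nonneg, hjM⟩, rfl⟩

theorem Int.ncard_Icc_zero (M : ℤ) : (Set.Icc 0 M).ncard = (M + 1).toNat := by
  rw [← Finset.coe_Icc, Set.ncard_coe_finset, Int.card_Icc, sub_zero]

theorem solSet_eq_image_progression (a b c x y : ℕ) (hxb : -(b : ℤ) ≤ -(x : ℤ) + y)
    (δ : ℤ) (hδ : δ = 0 ∨ δ = 1) (hpar : ((x : ℤ) + y - b - δ) % 2 = 0) :
    solSet a b c x y =
      progression δ ((-(x : ℤ) + y + b + δ) / 2) (((x : ℤ) + y - b - δ) / 2) ''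
        Set.Icc 0 (min (min ((2 * (a : ℤ) - c - δ) / 2) (((x : ℤ) - y + b - δ) / 2))
          (((x : ℤ) + y - b - δ) / 2)) := by
  ext ⟨d, e, f⟩
  simp only [solSet, progression, Set.mem_ofPred_eq, Set.mem_image, Set.mem_Icc, le_min_iff,
    Prod.mk.injEq]
  constructor
  · rintro ⟨hd0, hd, he0, heb, hf0, hdef, hef⟩
    exact ⟨e - (-(x : ℤ) + y + b + δ) / 2, by omega⟩
  · rintro ⟨j, ⟨hj0, ⟨hjd, hje⟩, hjf⟩, rfl, rfl, rfl⟩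
    omega

theorem mcount_closed_form_and_solutions_general (a b c x y : ℕ)
    (hne : mcount a b c x y ≠ 0) (hxb : -(b : ℤ) ≤ -(x : ℤ) + y)
    (δ : ℤ) (hδ : δ = 0 ∨ δ = 1) (hpar : ((x : ℤ) + y - b - δ) % 2 = 0) :
    (mcount a b c x y : ℤ) =
      min (min ((2 * (a : ℤ) - c - δ) / 2) (((x : ℤ) - y + b - δ) / 2))
        (((x : ℤ) + y - b - δ) / 2) + 1 ∧
    solSet a b c x y =
      {t : ℤ × ℤ × ℤ | ∃ j : ℕ, (j : ℤ) ≤ (mcount a b c x y : ℤ) - 1 ∧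
        t = (δ + 2 * j, (-(x : ℤ) + y + b + δ) / 2 + j, ((x : ℤ) + y - b - δ) / 2 - j)} := by
  have hset := solSet_eq_image_progression a b c x y hxb δ hδ hpar
  set M := min (min ((2 * (a : ℤ) - c - δ) / 2) (((x : ℤ) - y + b - δ) / 2))
    (((x : ℤ) + y - b - δ) / 2)
  have hcard : mcount a b c x y = (M + 1).toNat := by
    rw [mcount, hset, Set.ncard_image_of_injective _ (progression_injective _ _ _),
      Int.ncard_Icc_zero]
  have hM : (mcount a b c x y : ℤ) = M + 1 := by omega
  refine ⟨hM, ?_⟩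
  rw [hset, Int.image_Icc_zero_eq_setOf, hM, add_sub_cancel_right]
  rfl

/-- If the solution count is nonzero, `y ≥ b` and `−x+y ≥ −b`, then (with `δ ∈ {0,1}` of the
parity of `x+y−b`) `m(x,y) = min(⌊(2a−c−δ)/2⌋, (x−y+b−δ)/2, (x+y−b−δ)/2) + 1` and the
solutions form the arithmetic progression starting at `(δ, (−x+y+b+δ)/2, (x+y−b−δ)/2)`
with common difference `(2,1,−1)`. -/
theorem mcount_closed_form_and_solutions (a b c x y : ℕ) (h1 : a ≤ c) (h2 : c ≤ 2 * a)
    (hne : mcount a b c x y ≠ 0) (hyb : b ≤ y) (hxb : -(b : ℤ) ≤ -(x : ℤ) + y)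
    (δ : ℤ) (hδ : δ = 0 ∨ δ = 1) (hpar : ((x : ℤ) + y - b - δ) % 2 = 0) :
    (mcount a b c x y : ℤ) =
      min (min ((2 * (a : ℤ) - c - δ) / 2) (((x : ℤ) - y + b - δ) / 2))
        (((x : ℤ) + y - b - δ) / 2) + 1 ∧
    solSet a b c x y =
      {t : ℤ × ℤ × ℤ | ∃ j : ℕ, (j : ℤ) ≤ (mcount a b c x y : ℤ) - 1 ∧
        t = (δ + 2 * j, (-(x : ℤ) + y + b + δ) / 2 + j, ((x : ℤ) + y - b - δ) / 2 - j)} :=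
  mcount_closed_form_and_solutions_general a b c x y hne hxb δ hδ hpar
end

section
/- Let Sp6 act on the standard 6-dimensional symplectic space over R with Weyl group elements indexed as w_{(i,j)}, and let R be the parabolic stabilizing ⟨f1,f2⟩ with Levi GL2×Sp2. The intersections R_{(i,j)} = R ∩ w_{(i,j)}^{-1} R w_{(i,j)} for the representative w_{(1,1)} = 1_2 ⊠ J_2 ⊠ 1_2 (where J_2 = [[0,-1],[1,0]] acts on ⟨e2,f2⟩) consist exactly of the matrices of the block form with diagonal entries (t1, t2, m2, t2^{-1}, t1^{-1}) where m2 ∈ Sp2, upper-triangular stars as indicated: entries above the diagonal in positions (1,2),(1,3),(1,4),(1,5),(2,5),(3,5),(4,5) may be arbitrary subject to the symplectic condition. -/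
/-! The intersection `R_{(1,1)} = R ∩ w_{(1,1)}^{-1} R w_{(1,1)}` inside `Sp₆(ℝ)`, where `R`
is the parabolic stabilizing `⟨f1,f2⟩` and `w_{(1,1)} = 1₂ ⊠ J₂ ⊠ 1₂`. Coordinates `0,…,5`
of `ℝ⁶` are the basis vectors `e1,e2,e3,f3,f2,f1`; matrices act on the right of row vectors,
so the matrix entries below are exactly those of the displayed block form. -/

noncomputable section

open Matrix

abbrev V6 : Type := Fin 6 → ℝ

/-- Symplectic form; coordinates `0,…,5` are `e1,e2,e3,f3,f2,f1`. -/
def symp (x y : V6) : ℝ :=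
  x 0 * y 5 - x 5 * y 0 + x 1 * y 4 - x 4 * y 1 + x 2 * y 3 - x 3 * y 2

def e2 : V6 := Pi.single 1 1
def f2 : V6 := Pi.single 4 1
def f1 : V6 := Pi.single 5 1

/-- `Sp₆(ℝ)`: matrices preserving the symplectic form (right action on row vectors). -/
def Sp6 : Set (Matrix (Fin 6) (Fin 6) ℝ) :=
  {g | ∀ v w : V6, symp (vecMul v g) (vecMul w g) = symp v w}

/-- The parabolic `R` stabilizing the isotropic plane `⟨f1, f2⟩`. -/
def Rpar : Set (Matrix (Fin 6) (Fin 6) ℝ) :=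
  {g | g ∈ Sp6 ∧ vecMul f1 g ∈ Submodule.span ℝ {f1, f2} ∧
    vecMul f2 g ∈ Submodule.span ℝ {f1, f2}}

/-- The Weyl representative `w_{(1,1)} = 1₂ ⊠ J₂ ⊠ 1₂` with `J₂ = [[0,−1],[1,0]]` acting on
`⟨e2, f2⟩`: `e2 ↦ −f2`, `f2 ↦ e2`, all other basis vectors fixed. -/
def w11 : Matrix (Fin 6) (Fin 6) ℝ :=
  Matrix.of ![![1,0,0,0,0,0], ![0,0,0,0,-1,0], ![0,0,1,0,0,0],
              ![0,0,0,1,0,0], ![0,1,0,0,0,0], ![0,0,0,0,0,1]]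

/- Since `f1 ᵥ* w11 = f1` and `f2 ᵥ* w11 = e2`, the condition `w11 * g * w11⁻¹ ∈ R` says that
`f1 ᵥ* g` and `e2 ᵥ* g` lie in `⟨f1, f2⟩ ᵥ* w11 = ⟨f1, e2⟩`. Together with `g ∈ R` this pins down
rows `f1`, `f2`, `e2` of `g`. The pairings `ω(e1 g, f1 g) = ω(e2 g, f2 g) = 1` make their diagonal
entries invertible, so these three rows span `⟨f1, f2, e2⟩`; the rows `e3 g`, `f3 g` are
`ω`-orthogonal to them, which kills their `e1`, `e2`, `f2` entries, and `ω(e3 g, f3 g) = 1` is then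
the determinant condition on the `Sp₂` block. -/

lemma mem_span_f1_f2_iff (v : V6) :
    v ∈ Submodule.span ℝ {f1, f2} ↔ v 0 = 0 ∧ v 1 = 0 ∧ v 2 = 0 ∧ v 3 = 0 := by
  rw [Submodule.mem_span_pair]
  constructor
  · rintro ⟨a, b, rfl⟩
    simp [f1, f2]
  · rintro ⟨h0, h1, h2, h3⟩
    refine ⟨v 5, v 4, funext fun i => ?_⟩
    fin_cases i <;> simp [f1, f2, h0, h1, h2, h3]

lemma f1_vecMul (g : Matrix (Fin 6) (Fin 6) ℝ) : f1 ᵥ* g = g 5 := single_one_vecMul 5 g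

lemma f2_vecMul (g : Matrix (Fin 6) (Fin 6) ℝ) : f2 ᵥ* g = g 4 := single_one_vecMul 4 g

lemma e2_vecMul (g : Matrix (Fin 6) (Fin 6) ℝ) : e2 ᵥ* g = g 1 := single_one_vecMul 1 g

lemma mul_mem_Sp6 {A B : Matrix (Fin 6) (Fin 6) ℝ} (hA : A ∈ Sp6) (hB : B ∈ Sp6) :
    A * B ∈ Sp6 := fun v w => by
  rw [← vecMul_vecMul, ← vecMul_vecMul, hB, hA]

lemma inv_mem_Sp6 {g : Matrix (Fin 6) (Fin 6) ℝ} (hg : g ∈ Sp6) (hdet : IsUnit g.det) :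
    g⁻¹ ∈ Sp6 := fun v w => by
  rw [← hg, vecMul_vecMul, vecMul_vecMul, nonsing_inv_mul _ hdet, vecMul_one, vecMul_one]

lemma symp_row_of_mem_Sp6 {g : Matrix (Fin 6) (Fin 6) ℝ} (hg : g ∈ Sp6) (i j : Fin 6) :
    symp (g i) (g j) = symp (Pi.single i 1) (Pi.single j 1) := by
  have h := hg (Pi.single i 1) (Pi.single j 1)
  rwa [single_one_vecMul, single_one_vecMul] at h

lemma w11_mul_transpose : w11 * w11ᵀ = 1 := by
  ext i j
  fin_cases i <;> fin_cases j <;> simp [w11, mul_apply, Fin.sum_univ_six]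

lemma w11_inv : w11⁻¹ = w11ᵀ := inv_eq_right_inv w11_mul_transpose

lemma w11_mem_Sp6 : w11 ∈ Sp6 := fun v w => by
  simp [symp, w11, vecMul, dotProduct, Fin.sum_univ_six]
  ring

lemma f1_vecMul_w11 : f1 ᵥ* w11 = f1 := by
  ext i; fin_cases i <;> simp [f1, w11, vecMul, dotProduct, Fin.sum_univ_six]

lemma f2_vecMul_w11 : f2 ᵥ* w11 = e2 := by
  ext i; fin_cases i <;> simp [f2, e2, w11, vecMul, dotProduct, Fin.sum_univ_six]

lemma w11_mulVec_mem_span_f1_f2_iff (v : V6) :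
    w11 *ᵥ v ∈ Submodule.span ℝ {f1, f2} ↔ v 0 = 0 ∧ v 4 = 0 ∧ v 2 = 0 ∧ v 3 = 0 := by
  simp [mem_span_f1_f2_iff, w11, dotProduct, Fin.sum_univ_six]

lemma mem_Rpar_iff (g : Matrix (Fin 6) (Fin 6) ℝ) :
    g ∈ Rpar ↔ g ∈ Sp6 ∧ (g 5 0 = 0 ∧ g 5 1 = 0 ∧ g 5 2 = 0 ∧ g 5 3 = 0) ∧
      (g 4 0 = 0 ∧ g 4 1 = 0 ∧ g 4 2 = 0 ∧ g 4 3 = 0) := by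
  rw [Rpar, Set.mem_ofPred_eq, f1_vecMul, f2_vecMul, mem_span_f1_f2_iff, mem_span_f1_f2_iff]

lemma conj_w11_mem_Rpar_iff {g : Matrix (Fin 6) (Fin 6) ℝ} (hg : g ∈ Sp6) :
    w11 * g * w11⁻¹ ∈ Rpar ↔ (g 5 0 = 0 ∧ g 5 4 = 0 ∧ g 5 2 = 0 ∧ g 5 3 = 0) ∧
      (g 1 0 = 0 ∧ g 1 4 = 0 ∧ g 1 2 = 0 ∧ g 1 3 = 0) := by
  have hconj : w11 * g * w11⁻¹ ∈ Sp6 :=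
    mul_mem_Sp6 (mul_mem_Sp6 w11_mem_Sp6 hg)
      (inv_mem_Sp6 w11_mem_Sp6 (isUnit_det_of_right_inverse w11_mul_transpose))
  rw [Rpar, Set.mem_ofPred_eq, and_iff_right hconj, ← vecMul_vecMul, ← vecMul_vecMul,
    ← vecMul_vecMul, ← vecMul_vecMul, f1_vecMul_w11, f2_vecMul_w11, f1_vecMul, e2_vecMul,
    w11_inv, vecMul_transpose, vecMul_transpose,
    w11_mulVec_mem_span_f1_f2_iff, w11_mulVec_mem_span_f1_f2_iff]

lemma mem_Rpar_and_conj_mem_Rpar_iff (g : Matrix (Fin 6) (Fin 6) ℝ) :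
    (g ∈ Rpar ∧ w11 * g * w11⁻¹ ∈ Rpar) ↔ g ∈ Sp6 ∧
      (g 1 0 = 0 ∧ g 1 2 = 0 ∧ g 1 3 = 0 ∧ g 1 4 = 0) ∧
      (g 4 0 = 0 ∧ g 4 1 = 0 ∧ g 4 2 = 0 ∧ g 4 3 = 0) ∧
      (g 5 0 = 0 ∧ g 5 1 = 0 ∧ g 5 2 = 0 ∧ g 5 3 = 0 ∧ g 5 4 = 0) := by
  rw [mem_Rpar_iff]
  constructor
  · rintro ⟨⟨hg, ⟨z50, z51, z52, z53⟩, z4⟩, hconj⟩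
    obtain ⟨⟨-, z54, -, -⟩, z10, z14, z12, z13⟩ := (conj_w11_mem_Rpar_iff hg).1 hconj
    exact ⟨hg, ⟨z10, z12, z13, z14⟩, z4, z50, z51, z52, z53, z54⟩
  · rintro ⟨hg, ⟨z10, z12, z13, z14⟩, z4, z50, z51, z52, z53, z54⟩
    exact ⟨⟨hg, ⟨z50, z51, z52, z53⟩, z4⟩,
      (conj_w11_mem_Rpar_iff hg).2 ⟨⟨z50, z54, z52, z53⟩, z10, z14, z12, z13⟩⟩

lemma entries_of_mem_Sp6_of_rows {g : Matrix (Fin 6) (Fin 6) ℝ} (hg : g ∈ Sp6)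
    (h1 : g 1 0 = 0 ∧ g 1 2 = 0 ∧ g 1 3 = 0 ∧ g 1 4 = 0)
    (h4 : g 4 0 = 0 ∧ g 4 1 = 0 ∧ g 4 2 = 0 ∧ g 4 3 = 0)
    (h5 : g 5 0 = 0 ∧ g 5 1 = 0 ∧ g 5 2 = 0 ∧ g 5 3 = 0 ∧ g 5 4 = 0) :
    g 0 0 * g 5 5 = 1 ∧ g 1 1 * g 4 4 = 1 ∧ g 2 2 * g 3 3 - g 2 3 * g 3 2 = 1 ∧
      (g 2 0 = 0 ∧ g 2 1 = 0 ∧ g 2 4 = 0) ∧ (g 3 0 = 0 ∧ g 3 1 = 0 ∧ g 3 4 = 0) := by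
  obtain ⟨z10, z12, z13, z14⟩ := h1
  obtain ⟨z40, z41, z42, z43⟩ := h4
  obtain ⟨z50, z51, z52, z53, z54⟩ := h5
  have hω := symp_row_of_mem_Sp6 hg
  have h05 : g 0 0 * g 5 5 = 1 := by simpa [symp, z50, z51, z52, z53, z54] using hω 0 5
  have h14 : g 1 1 * g 4 4 = 1 := by
    simpa [symp, z10, z12, z13, z14, z40, z41, z42, z43] using hω 1 4
  have h55 : g 5 5 ≠ 0 := right_ne_zero_of_mul_eq_one h05
  have h44 : g 4 4 ≠ 0 := right_ne_zero_of_mul_eq_one h14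
  have h11 : g 1 1 ≠ 0 := left_ne_zero_of_mul_eq_one h14
  have hperp (v : V6) (hv5 : symp v (g 5) = 0) (hv4 : symp v (g 4) = 0)
      (hv1 : symp v (g 1) = 0) : v 0 = 0 ∧ v 1 = 0 ∧ v 4 = 0 := by
    simp only [symp, z50, z51, z52, z53, z54, z40, z41, z42, z43, z10, z12, z13, z14,
      mul_zero, sub_zero, add_zero] at hv5 hv4 hv1
    have hv0 : v 0 = 0 := (mul_eq_zero.1 hv5).resolve_right h55
    rw [hv0, zero_mul, zero_add] at hv4
    rw [hv0, zero_mul, zero_sub, neg_eq_zero] at hv1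
    exact ⟨hv0, (mul_eq_zero.1 hv4).resolve_right h44, (mul_eq_zero.1 hv1).resolve_right h11⟩
  have hperp_row (k : Fin 6) (hk : k = 2 ∨ k = 3) : g k 0 = 0 ∧ g k 1 = 0 ∧ g k 4 = 0 := by
    apply hperp <;> rw [hω] <;> rcases hk with rfl | rfl <;> simp [symp]
  obtain ⟨z20, z21, z24⟩ := hperp_row 2 (Or.inl rfl)
  obtain ⟨z30, z31, z34⟩ := hperp_row 3 (Or.inr rfl)
  have h23 : g 2 2 * g 3 3 - g 2 3 * g 3 2 = 1 := by
    simpa [symp, z20, z21, z24, z30, z31, z34] using hω 2 3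
  exact ⟨h05, h14, h23, ⟨z20, z21, z24⟩, z30, z31, z34⟩

/-- `R ∩ w_{(1,1)}^{-1} R w_{(1,1)}` consists exactly of the symplectic matrices of the block
form with diagonal `(t1, t2, m2, t2⁻¹, t1⁻¹)`, `m2 ∈ Sp₂` (acting on `⟨e3,f3⟩`, i.e. of
determinant 1), and arbitrary entries only in positions `(1,2),(1,3),(1,4),(1,5),(2,5),(3,5),
(4,5)` of the block decomposition (subject to the symplectic condition). -/
theorem R11_description :
    {g : Matrix (Fin 6) (Fin 6) ℝ | g ∈ Rpar ∧ w11 * g * w11⁻¹ ∈ Rpar} =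
    {g : Matrix (Fin 6) (Fin 6) ℝ | g ∈ Sp6 ∧ ∃ t1 t2 : ℝ, t1 ≠ 0 ∧ t2 ≠ 0 ∧
      g 0 0 = t1 ∧ g 1 1 = t2 ∧ g 4 4 = t2⁻¹ ∧ g 5 5 = t1⁻¹ ∧
      g 2 2 * g 3 3 - g 2 3 * g 3 2 = 1 ∧
      g 1 0 = 0 ∧ g 1 2 = 0 ∧ g 1 3 = 0 ∧ g 1 4 = 0 ∧
      g 2 0 = 0 ∧ g 2 1 = 0 ∧ g 2 4 = 0 ∧
      g 3 0 = 0 ∧ g 3 1 = 0 ∧ g 3 4 = 0 ∧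
      g 4 0 = 0 ∧ g 4 1 = 0 ∧ g 4 2 = 0 ∧ g 4 3 = 0 ∧
      g 5 0 = 0 ∧ g 5 1 = 0 ∧ g 5 2 = 0 ∧ g 5 3 = 0 ∧ g 5 4 = 0} := by
  ext g
  rw [Set.mem_ofPred_eq, Set.mem_ofPred_eq, mem_Rpar_and_conj_mem_Rpar_iff]
  constructor
  · rintro ⟨hg, h1, h4, h5⟩
    obtain ⟨h05, h14, hdet, ⟨z20, z21, z24⟩, z30, z31, z34⟩ :=
      entries_of_mem_Sp6_of_rows hg h1 h4 h5
    obtain ⟨z10, z12, z13, z14⟩ := h1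
    obtain ⟨z40, z41, z42, z43⟩ := h4
    exact ⟨hg, g 0 0, g 1 1, left_ne_zero_of_mul_eq_one h05, left_ne_zero_of_mul_eq_one h14,
      rfl, rfl, eq_inv_of_mul_eq_one_right h14, eq_inv_of_mul_eq_one_right h05, hdet,
      z10, z12, z13, z14, z20, z21, z24, z30, z31, z34, z40, z41, z42, z43, h5⟩
  · rintro ⟨hg, -, -, -, -, -, -, -, -, -, z10, z12, z13, z14, -, -, -, -, -, -,
      z40, z41, z42, z43, z5⟩
    exact ⟨hg, ⟨z10, z12, z13, z14⟩, ⟨z40, z41, z42, z43⟩, z5⟩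

end
end
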